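/- Suppose A_1,...,A_m, A'_1,...,A'_m, u_1, u_2 ∈ Mat_n(k) satisfy u_1·A'_j = A_j·u_2 for all odd j and A_j·u_1 = u_2·A'_j for all even j (1 ≤ j ≤ m). Then, with Q defined by Q_0 = 1, Q_1(a) = -a, Q_m(A_1,...,A_m) = -Q_{m-1}(A_2,...,A_m)A_1 + Q_{m-2}(A_3,...,A_m): if m is odd then Q_m(A_1,...,A_m)·u_2 = u_1·Q_m(A'_1,...,A'_m), and if m is even then Q_m(A_1,...,A_m)·u_2 = u_2·Q_m(A'_1,...,A'_m). -/
import Mathlib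

open Matrix

def Qc {R : Type*} [Ring R] : List R → R
  | [] => 1
  | [a] => -a
  | a :: b :: l => -(Qc (b :: l)) * a + Qc l

lemma Qc_aux {R : Type*} [Ring R] (L : List R) :
    ∀ (L' : List R) (v1 v2 : R), L.length = L'.length →
    (∀ i (h : i < L.length) (h' : i < L'.length),
      (Odd (i+1) → v1 * L'.get ⟨i,h'⟩ = L.get ⟨i,h⟩ * v2) ∧
      (Even (i+1) → L.get ⟨i,h⟩ * v1 = v2 * L'.get ⟨i,h'⟩)) →
    (Odd L.length → Qc L * v2 = v1 * Qc L') ∧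
    (Even L.length → Qc L * v2 = v2 * Qc L') := by
  induction L using Qc.induct with
  | case1 =>
    intro L' v1 v2 hlen hc
    cases L' with
    | nil => simp [Qc, Nat.odd_iff]
    | cons => simp at hlen
  | case2 a =>
    intro L' v1 v2 hlen hc
    match L' with
    | [a'] =>
      have h0 := (hc 0 (by simp) (by simp)).1 (by decide)
      simp only [List.get] at h0
      constructor
      · intro _
        simp only [Qc, neg_mul, mul_neg, h0]
      · intro h; simp [Nat.even_iff] at h
    | [] => simp at hlen
    | _ :: _ :: _ => simp at hlen
  | case3 a b l ih1 ih2 =>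
    intro L' v1 v2 hlen hc
    match L' with
    | a' :: b' :: l' =>
      have hlen2 : l.length = l'.length := by simpa using hlen
      -- condition for tail (b::l) vs (b'::l') with v2, v1 swapped
      have hc1 : ∀ i (h : i < (b::l).length) (h' : i < (b'::l').length),
          (Odd (i+1) → v2 * (b'::l').get ⟨i,h'⟩ = (b::l).get ⟨i,h⟩ * v1) ∧
          (Even (i+1) → (b::l).get ⟨i,h⟩ * v2 = v1 * (b'::l').get ⟨i,h'⟩) := by
        intro i h h'
        have := hc (i+1) (by simpa using h) (by simpa using h')
        constructor
        · intro hi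
          have he : Even (i+1+1) := by
            rw [Nat.even_iff]; rw [Nat.odd_iff] at hi; omega
          have := this.2 he
          simp only [List.get_cons_succ] at this
          exact this.symm
        · intro hi
          have ho : Odd (i+1+1) := by
            rw [Nat.odd_iff]; rw [Nat.even_iff] at hi; omega
          have := this.1 ho
          simp only [List.get_cons_succ] at this
          exact this.symm
      have hc2 : ∀ i (h : i < l.length) (h' : i < l'.length),
          (Odd (i+1) → v1 * l'.get ⟨i,h'⟩ = l.get ⟨i,h⟩ * v2) ∧
          (Even (i+1) → l.get ⟨i,h⟩ * v1 = v2 * l'.get ⟨i,h'⟩) := by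
        intro i h h'
        have := hc (i+2) (by simpa using h) (by simpa using h')
        constructor
        · intro hi
          have ho : Odd (i+2+1) := by rw [Nat.odd_iff] at hi ⊢; omega
          have := this.1 ho
          simpa using this
        · intro hi
          have he : Even (i+2+1) := by rw [Nat.even_iff] at hi ⊢; omega
          have := this.2 he
          simpa using this
      have IH1 := ih1 (b'::l') v2 v1 (by simpa using hlen) hc1
      have IH2 := ih2 l' v1 v2 hlen2 hc2
      have h0 : v1 * a' = a * v2 := by
        have := (hc 0 (by simp) (by simp)).1 (by decide)
        simpa using this
      constructor
      · intro hodd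
        have hl : Odd l.length := by
          simp only [List.length_cons] at hodd
          rw [Nat.odd_iff] at hodd ⊢; omega
        have hbl : Even (b::l).length := by
          simp only [List.length_cons]
          rw [Nat.odd_iff] at hl; rw [Nat.even_iff]; omega
        have e1 : Qc (b::l) * v1 = v1 * Qc (b'::l') := IH1.2 hbl
        have e2 : Qc l * v2 = v1 * Qc l' := IH2.1 hl
        show (-(Qc (b :: l)) * a + Qc l) * v2 = v1 * (-(Qc (b' :: l')) * a' + Qc l')
        have key : -(Qc (b::l)) * a * v2 = v1 * (-(Qc (b'::l')) * a') := by
          calc -(Qc (b::l)) * a * v2 = -(Qc (b::l) * (a * v2)) := by noncomm_ring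
            _ = -(Qc (b::l) * (v1 * a')) := by rw [h0]
            _ = -((Qc (b::l) * v1) * a') := by noncomm_ring
            _ = -((v1 * Qc (b'::l')) * a') := by rw [e1]
            _ = v1 * (-(Qc (b'::l')) * a') := by noncomm_ring
        rw [add_mul, mul_add, key, e2]
      · intro heven
        have hl : Even l.length := by
          simp only [List.length_cons] at heven
          rw [Nat.even_iff] at heven ⊢; omega
        have hbl : Odd (b::l).length := by
          simp only [List.length_cons]
          rw [Nat.even_iff] at hl; rw [Nat.odd_iff]; omega
        have e1 : Qc (b::l) * v1 = v2 * Qc (b'::l') := IH1.1 hbl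
        have e2 : Qc l * v2 = v2 * Qc l' := IH2.2 hl
        show (-(Qc (b :: l)) * a + Qc l) * v2 = v2 * (-(Qc (b' :: l')) * a' + Qc l')
        have key : -(Qc (b::l)) * a * v2 = v2 * (-(Qc (b'::l')) * a') := by
          calc -(Qc (b::l)) * a * v2 = -(Qc (b::l) * (a * v2)) := by noncomm_ring
            _ = -(Qc (b::l) * (v1 * a')) := by rw [h0]
            _ = -((Qc (b::l) * v1) * a') := by noncomm_ring
            _ = -((v2 * Qc (b'::l')) * a') := by rw [e1]
            _ = v2 * (-(Qc (b'::l')) * a') := by noncomm_ring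
        rw [add_mul, mul_add, key, e2]
    | [] => simp at hlen
    | [_] => simp at hlen

/-- If `u₁·A'ⱼ = Aⱼ·u₂` for odd `j` and `Aⱼ·u₁ = u₂·A'ⱼ` for even `j`, then
`Qₘ(A₁,…,Aₘ)·u₂ = u₁·Qₘ(A'₁,…,A'ₘ)` for `m` odd and
`Qₘ(A₁,…,Aₘ)·u₂ = u₂·Qₘ(A'₁,…,A'ₘ)` for `m` even.
(Here `A j` denotes `A_{j+1}`, so the index `j.val + 1` runs over `1, …, m`.) -/
theorem stmt_7 {k : Type*} [Field k] {n m : ℕ} (hm : 1 ≤ m)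
    (A A' : Fin m → Matrix (Fin n) (Fin n) k)
    (u1 u2 : Matrix (Fin n) (Fin n) k)
    (hodd : ∀ j : Fin m, Odd (j.val + 1) → u1 * A' j = A j * u2)
    (heven : ∀ j : Fin m, Even (j.val + 1) → A j * u1 = u2 * A' j) :
    (Odd m → Qc (List.ofFn A) * u2 = u1 * Qc (List.ofFn A')) ∧
    (Even m → Qc (List.ofFn A) * u2 = u2 * Qc (List.ofFn A')) := by
  have := Qc_aux (List.ofFn A) (List.ofFn A') u1 u2 (by simp) ?_
  · simpa using this
  · intro i h h'
    simp only [List.length_ofFn] at h h'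
    constructor
    · intro hi
      simpa [List.get_ofFn] using hodd ⟨i, h⟩ hi
    · intro hi
      simpa [List.get_ofFn] using heven ⟨i, h⟩ hi
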